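/- arXiv:1808.07649 — 3 statements merged into one kernel-verified Lean document; each statement's English description precedes it below -/
import Mathlib

section
/- For γ > 1 and ρ̃ > 0, if ρ ≥ 0 satisfies ρ^{γ-1} ≥ γ²(ρ̃^{γ-1} + 1), then ρ^{(2γ-1)/γ} ≤ ρ·((1/γ)ρ^{γ-1} + (γ-1)/γ) ≤ (1/(γ-1))(ρ^γ - γρ̃^{γ-1}ρ) ≤ G(ρ), where G(ρ) = (1/(γ-1))(ρ^γ - ρ̃^γ - γρ̃^{γ-1}(ρ - ρ̃)). -/
theorem stmt2 (γ ρt ρ : ℝ) (hγ : 1 < γ) (hρt : 0 < ρt) (hρ : 0 ≤ ρ)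
    (hbig : ρ ^ (γ - 1) ≥ γ ^ (2:ℕ) * (ρt ^ (γ - 1) + 1)) :
    ρ ^ ((2 * γ - 1) / γ) ≤ ρ * ((1 / γ) * ρ ^ (γ - 1) + (γ - 1) / γ) ∧
    ρ * ((1 / γ) * ρ ^ (γ - 1) + (γ - 1) / γ) ≤ (1 / (γ - 1)) * (ρ ^ γ - γ * ρt ^ (γ - 1) * ρ) ∧
    (1 / (γ - 1)) * (ρ ^ γ - γ * ρt ^ (γ - 1) * ρ) ≤
      (1 / (γ - 1)) * (ρ ^ γ - ρt ^ γ - γ * ρt ^ (γ - 1) * (ρ - ρt)) := by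
  have hγ0 : (0:ℝ) < γ := by linarith
  have hγ1 : (0:ℝ) < γ - 1 := by linarith
  set x := ρ ^ (γ - 1) with hxdef
  set t := ρt ^ (γ - 1) with htdef
  have ht : 0 < t := Real.rpow_pos_of_pos hρt _
  have hxge : γ ^ (2:ℕ) ≤ x := by nlinarith
  have hγsq : (1:ℝ) < γ ^ (2:ℕ) := by nlinarith
  have hρpos : 0 < ρ := by
    rcases hρ.eq_or_lt with h | h
    · exfalso
      have : x = 0 := by rw [hxdef, ← h, Real.zero_rpow (by linarith : γ - 1 ≠ 0)]
      nlinarith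
    · exact h
  have hxpos : (0:ℝ) < x := by nlinarith
  have hrg : ρ ^ γ = x * ρ := by
    rw [hxdef]
    calc ρ ^ γ = ρ ^ (γ - 1 + 1) := by norm_num
      _ = ρ ^ (γ - 1) * ρ ^ (1:ℝ) := Real.rpow_add hρpos _ _
      _ = ρ ^ (γ - 1) * ρ := by rw [Real.rpow_one]
  have htg : ρt ^ γ = t * ρt := by
    rw [htdef]
    calc ρt ^ γ = ρt ^ (γ - 1 + 1) := by norm_num
      _ = ρt ^ (γ - 1) * ρt ^ (1:ℝ) := Real.rpow_add hρt _ _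
      _ = ρt ^ (γ - 1) * ρt := by rw [Real.rpow_one]
  refine ⟨?_, ?_, ?_⟩
  · -- Part 1
    have h1 : ρ ^ ((2 * γ - 1) / γ) = ρ * x ^ (1 / γ) := by
      have : (2 * γ - 1) / γ = 1 + (γ - 1) * (1 / γ) := by field_simp; ring
      rw [this, Real.rpow_add hρpos, Real.rpow_one, Real.rpow_mul hρ]
    rw [h1]
    have hb := rpow_one_add_le_one_add_mul_self (s := x - 1) (by linarith) (p := 1 / γ)
      (by positivity) (by rw [div_le_one hγ0]; linarith)
    have hx1 : 1 + (x - 1) = x := by ring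
    rw [hx1] at hb
    have heq : 1 + 1 / γ * (x - 1) = (1 / γ) * x + (γ - 1) / γ := by field_simp; ring
    rw [heq] at hb
    exact mul_le_mul_of_nonneg_left hb hρ
  · -- Part 2
    have key : (1 / γ) * x + (γ - 1) / γ ≤ (1 / (γ - 1)) * (x - γ * t) := by
      rw [← sub_nonneg]
      have heq : (1 / (γ - 1)) * (x - γ * t) - ((1 / γ) * x + (γ - 1) / γ)
          = (x - γ ^ (2:ℕ) * t - (γ - 1) ^ 2) / (γ * (γ - 1)) := by
        field_simp
        ring
      rw [heq]
      apply div_nonneg _ (by positivity)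
      nlinarith
    calc ρ * ((1 / γ) * x + (γ - 1) / γ) ≤ ρ * ((1 / (γ - 1)) * (x - γ * t)) :=
          mul_le_mul_of_nonneg_left key hρ
      _ = (1 / (γ - 1)) * (ρ ^ γ - γ * t * ρ) := by rw [hrg]; ring
  · -- Part 3
    apply mul_le_mul_of_nonneg_left _ (by positivity : (0:ℝ) ≤ 1 / (γ - 1))
    rw [htg]
    nlinarith [mul_pos ht hρt]
end

section
/- For γ > 1 and ρ̃ > 0, if ρ ≥ 0 satisfies ρ^{γ-1} ≥ 2γ·ρ̃^{γ-1}, then ρ^γ ≤ 2(γ-1)·G(ρ), where G(ρ) = (1/(γ-1))(ρ^γ - ρ̃^γ - γρ̃^{γ-1}(ρ - ρ̃)). -/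
theorem stmt3 (γ ρt ρ : ℝ) (hγ : 1 < γ) (hρt : 0 < ρt) (hρ : 0 ≤ ρ)
    (hbig : ρ ^ (γ - 1) ≥ 2 * γ * ρt ^ (γ - 1)) :
    ρ ^ γ ≤ 2 * (γ - 1) * ((1 / (γ - 1)) * (ρ ^ γ - ρt ^ γ - γ * ρt ^ (γ - 1) * (ρ - ρt))) := by
  have hb : (0:ℝ) < ρt ^ (γ - 1) := Real.rpow_pos_of_pos hρt _
  have hρpos : 0 < ρ := by
    rcases hρ.lt_or_eq with h | h
    · exact h
    · exfalso
      rw [← h, Real.zero_rpow (by linarith : γ - 1 ≠ 0)] at hbig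
      nlinarith
  have ha : ρ ^ γ = ρ ^ (γ - 1) * ρ := by
    rw [← Real.rpow_add_one (ne_of_gt hρpos)]; ring_nf
  have hat : ρt ^ γ = ρt ^ (γ - 1) * ρt := by
    rw [← Real.rpow_add_one (ne_of_gt hρt)]; ring_nf
  rw [ha, hat]
  have h1 : 2 * (γ - 1) * ((1 / (γ - 1)) * (ρ ^ (γ - 1) * ρ - ρt ^ (γ - 1) * ρt - γ * ρt ^ (γ - 1) * (ρ - ρt)))
      = 2 * (ρ ^ (γ - 1) * ρ - ρt ^ (γ - 1) * ρt - γ * ρt ^ (γ - 1) * (ρ - ρt)) := by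
    have hne : γ - 1 ≠ 0 := by linarith
    set X := ρ ^ (γ - 1) * ρ - ρt ^ (γ - 1) * ρt - γ * ρt ^ (γ - 1) * (ρ - ρt) with hX
    calc 2 * (γ - 1) * ((1 / (γ - 1)) * X) = 2 * ((γ - 1) * (1 / (γ - 1))) * X := by ring
      _ = 2 * X := by rw [mul_one_div_cancel hne]; ring
  rw [h1]
  nlinarith [mul_le_mul_of_nonneg_right hbig hρ, mul_pos hb hρt]
end

section
/- Let ρ, u : ℝ → ℝ with u ∈ H¹(ℝ), ρ - ρ̃ ∈ L²(ℝ) for a constant ρ̃ > 0, and ρ ≥ 0. Then there is a constant C depending only on ρ̃ and ‖ρ - ρ̃‖_{L²} such that ‖u‖²_{L²} ≤ C(1 + ‖√ρ · u‖²_{L²} + ‖u'‖²_{L²}). -/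
/-!
Write `ρ̃ ‖u‖² = ‖√ρ u‖² + ∫ (ρ̃ - ρ) u²`. The last integral is at most
`‖u‖_∞ ‖ρ - ρ̃‖ ‖u‖` by Cauchy–Schwarz, and in one dimension `u(x)² = ∫_{-∞}^x 2 u u'` gives
`‖u‖_∞² ≤ 2 ‖u‖ ‖u'‖`. Two applications of Young's inequality then absorb the resulting
`‖u‖^{3/2} ‖u'‖^{1/2}` term into the left-hand side.
-/

open MeasureTheory Filter Set Topology

section L2
variable {α : Type*} [MeasurableSpace α] {μ : Measure α}

theorem MeasureTheory.MemLp.toReal_eLpNorm_two_eq_sqrt {f : α → ℝ} (hf : MemLp f 2 μ) :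
    (eLpNorm f 2 μ).toReal = √(∫ x, f x ^ 2 ∂μ) := by
  rw [hf.eLpNorm_eq_integral_rpow_norm two_ne_zero ENNReal.ofNat_ne_top,
    ENNReal.toReal_ofReal (by positivity), Real.sqrt_eq_rpow]
  norm_num [Real.norm_eq_abs, sq_abs]

theorem MeasureTheory.MemLp.toReal_eLpNorm_two_sq {f : α → ℝ} (hf : MemLp f 2 μ) :
    (eLpNorm f 2 μ).toReal ^ 2 = ∫ x, f x ^ 2 ∂μ := by
  rw [hf.toReal_eLpNorm_two_eq_sqrt, Real.sq_sqrt (integral_nonneg fun x => sq_nonneg _)]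

theorem integral_abs_mul_abs_le_toReal_eLpNorm_mul {f g : α → ℝ} (hf : MemLp f 2 μ)
    (hg : MemLp g 2 μ) :
    ∫ x, |f x| * |g x| ∂μ ≤ (eLpNorm f 2 μ).toReal * (eLpNorm g 2 μ).toReal := by
  have holder := integral_mul_norm_le_Lp_mul_Lq Real.HolderConjugate.two_two
    (by simpa using hf) (by simpa using hg)
  rw [hf.toReal_eLpNorm_two_eq_sqrt, hg.toReal_eLpNorm_two_eq_sqrt, Real.sqrt_eq_rpow,
    Real.sqrt_eq_rpow]
  simpa [Real.norm_eq_abs, sq_abs] using holder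

theorem mul_sq_toReal_eLpNorm_le {ρ u : α → ℝ} {c L : ℝ} (hρ : ∀ x, 0 ≤ ρ x) (hρc : MemLp (fun x => ρ x - c) 2 μ)
    (hu : MemLp u 2 μ) (hL₀ : 0 ≤ L) (hL : ∀ x, |u x| ≤ L) :
    c * (eLpNorm u 2 μ).toReal ^ 2 ≤
      (eLpNorm (fun x => √(ρ x) * u x) 2 μ).toReal ^ 2 +
        (eLpNorm (fun x => ρ x - c) 2 μ).toReal * L * (eLpNorm u 2 μ).toReal := by
  have hcross : Integrable (fun x => |ρ x - c| * |u x|) μ := hρc.abs.integrable_mul hu.abs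
  have hbound : ∀ x, |(ρ x - c) * u x ^ 2| ≤ L * (|ρ x - c| * |u x|) := fun x => by
    rw [abs_mul, abs_pow, sq, ← mul_assoc, mul_comm L]
    gcongr
    exact hL x
  have hdiff : Integrable (fun x => (ρ x - c) * u x ^ 2) μ :=
    (hcross.const_mul L).mono' (hρc.1.mul (hu.1.pow 2)) (ae_of_all _ hbound)
  have hρu : Integrable (fun x => ρ x * u x ^ 2) μ := by
    refine (hdiff.add (hu.integrable_sq.const_mul c)).congr (ae_of_all _ fun x => ?_)
    simp only [Pi.add_apply]
    ring
  have hρm : AEStronglyMeasurable ρ μ := by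
    simpa using hρc.1.add_const c
  have hsqrt : MemLp (fun x => √(ρ x) * u x) 2 μ := by
    refine (memLp_two_iff_integrable_sq ?_).2 ?_
    · exact (Real.continuous_sqrt.comp_aestronglyMeasurable hρm).mul hu.1
    simpa only [mul_pow, Real.sq_sqrt (hρ _)] using hρu
  calc c * (eLpNorm u 2 μ).toReal ^ 2
      = ∫ x, ρ x * u x ^ 2 ∂μ - ∫ x, (ρ x - c) * u x ^ 2 ∂μ := by
        rw [hu.toReal_eLpNorm_two_sq, ← integral_const_mul, ← integral_sub hρu hdiff]
        congr 1 with x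
        ring
    _ ≤ ∫ x, ρ x * u x ^ 2 ∂μ + ∫ x, L * (|ρ x - c| * |u x|) ∂μ := by
        have := (neg_le_abs _).trans <| (abs_integral_le_integral_abs).trans <|
          integral_mono hdiff.abs (hcross.const_mul L) hbound
        linarith
    _ = (eLpNorm (fun x => √(ρ x) * u x) 2 μ).toReal ^ 2 + L * ∫ x, |ρ x - c| * |u x| ∂μ := by
        rw [hsqrt.toReal_eLpNorm_two_sq, integral_const_mul]
        simp only [mul_pow, Real.sq_sqrt (hρ _)]
    _ ≤ (eLpNorm (fun x => √(ρ x) * u x) 2 μ).toReal ^ 2 +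
          L * ((eLpNorm (fun x => ρ x - c) 2 μ).toReal * (eLpNorm u 2 μ).toReal) := by
        gcongr
        exact integral_abs_mul_abs_le_toReal_eLpNorm_mul hρc hu
    _ = _ := by ring

end L2

theorem sq_le_two_mul_toReal_eLpNorm_mul_toReal_eLpNorm_deriv {u : ℝ → ℝ}
    (hu : Differentiable ℝ u) (hu₂ : MemLp u 2 volume) (hu'₂ : MemLp (deriv u) 2 volume)
    (x : ℝ) :
    u x ^ 2 ≤ 2 * (eLpNorm u 2 volume).toReal * (eLpNorm (deriv u) 2 volume).toReal := by
  have hderiv : ∀ y, HasDerivAt (fun y => u y ^ 2) (2 * (u y * deriv u y)) y := fun y => by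
    simpa [mul_assoc] using (hu y).hasDerivAt.fun_pow 2
  have hint : Integrable (fun y => 2 * (u y * deriv u y)) :=
    (hu₂.integrable_mul hu'₂).const_mul 2
  have hlim : Tendsto (fun y => u y ^ 2) atBot (𝓝 0) :=
    tendsto_zero_of_hasDerivAt_of_integrableOn_Iic (a := x) (fun y _ => hderiv y)
      hint.integrableOn hu₂.integrable_sq.integrableOn
  have hftc : ∫ y in Iic x, 2 * (u y * deriv u y) = u x ^ 2 := by
    rw [integral_Iic_of_hasDerivAt_of_tendsto' (fun y _ => hderiv y) hint.integrableOn hlim,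
      sub_zero]
  calc u x ^ 2 = ∫ y in Iic x, 2 * (u y * deriv u y) := hftc.symm
    _ ≤ ∫ y in Iic x, |2 * (u y * deriv u y)| :=
        setIntegral_mono hint.integrableOn hint.abs.integrableOn fun y => le_abs_self _
    _ ≤ ∫ y, |2 * (u y * deriv u y)| :=
        setIntegral_le_integral hint.abs (ae_of_all _ fun y => abs_nonneg _)
    _ = 2 * ∫ y, |u y| * |deriv u y| := by
        simp only [abs_mul, abs_two, integral_const_mul]
    _ ≤ 2 * ((eLpNorm u 2 volume).toReal * (eLpNorm (deriv u) 2 volume).toReal) := by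
        gcongr
        exact integral_abs_mul_abs_le_toReal_eLpNorm_mul hu₂ hu'₂
    _ = _ := by ring

theorem mul_le_half_mul_sq_add_sq_div {ε : ℝ} (hε : 0 < ε) (a b : ℝ) :
    a * b ≤ ε / 2 * a ^ 2 + b ^ 2 / (2 * ε) := by
  have : ε / 2 * a ^ 2 + b ^ 2 / (2 * ε) - a * b = (ε * a - b) ^ 2 / (2 * ε) := by
    field_simp; ring
  nlinarith [div_nonneg (sq_nonneg (ε * a - b)) (by positivity : (0:ℝ) ≤ 2 * ε)]

theorem sq_le_of_mul_sq_le_sq_add_mul_mul {c K N S D L : ℝ} (hc : 0 < c)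
    (hL : L ^ 2 ≤ 2 * N * D) (h : c * N ^ 2 ≤ S ^ 2 + K * L * N) :
    N ^ 2 ≤ (4 / c + 4 * K ^ 4 / c ^ 4) * (1 + S ^ 2 + D ^ 2) := by
  have young₁ : K * L * N ≤ c / 2 * N ^ 2 + K ^ 2 * N * D / c := by
    have hKL : (K * L) ^ 2 / (2 * c) ≤ K ^ 2 * N * D / c := by
      rw [div_le_div_iff₀ (by positivity) hc]
      nlinarith [mul_le_mul_of_nonneg_left hL (by positivity : 0 ≤ K ^ 2 * c)]
    linarith [mul_le_half_mul_sq_add_sq_div hc N (K * L)]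
  have young₂ : K ^ 2 * N * D / c ≤ c / 4 * N ^ 2 + K ^ 4 * D ^ 2 / c ^ 3 := by
    calc K ^ 2 * N * D / c = N * (K ^ 2 * D / c) := by ring
      _ ≤ c / 2 / 2 * N ^ 2 + (K ^ 2 * D / c) ^ 2 / (2 * (c / 2)) :=
        mul_le_half_mul_sq_add_sq_div (half_pos hc) _ _
      _ = c / 4 * N ^ 2 + K ^ 4 * D ^ 2 / c ^ 3 := by field_simp; ring
  have absorbed : c / 4 * N ^ 2 ≤ S ^ 2 + K ^ 4 * D ^ 2 / c ^ 3 := by linarith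
  have hN : N ^ 2 ≤ 4 / c * S ^ 2 + 4 * K ^ 4 / c ^ 4 * D ^ 2 :=
    calc N ^ 2 = 4 / c * (c / 4 * N ^ 2) := by field_simp
      _ ≤ 4 / c * (S ^ 2 + K ^ 4 * D ^ 2 / c ^ 3) := by gcongr
      _ = _ := by field_simp
  have : 0 ≤ 4 / c := by positivity
  have : 0 ≤ 4 * K ^ 4 / c ^ 4 := by positivity
  nlinarith [sq_nonneg S, sq_nonneg D]

theorem stmt9 (ρt M : ℝ) (hρt : 0 < ρt) (hM : 0 ≤ M) :
    ∃ C : ℝ, 0 < C ∧ ∀ (ρ u : ℝ → ℝ),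
      (∀ x, 0 ≤ ρ x) →
      MemLp (fun x => ρ x - ρt) 2 (volume : Measure ℝ) →
      eLpNorm (fun x => ρ x - ρt) 2 (volume : Measure ℝ) ≤ ENNReal.ofReal M →
      Differentiable ℝ u →
      MemLp u 2 (volume : Measure ℝ) →
      MemLp (deriv u) 2 (volume : Measure ℝ) →
      (eLpNorm u 2 (volume : Measure ℝ)).toReal ^ 2 ≤
        C * (1 + (eLpNorm (fun x => Real.sqrt (ρ x) * u x) 2 (volume : Measure ℝ)).toReal ^ 2
               + (eLpNorm (deriv u) 2 (volume : Measure ℝ)).toReal ^ 2) := by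
  refine ⟨4 / ρt + 4 * M ^ 4 / ρt ^ 4, by positivity,
    fun ρ u hρ hρ₂ hρM hu hu₂ hu'₂ => ?_⟩
  set N := (eLpNorm u 2 volume).toReal
  set D := (eLpNorm (deriv u) 2 volume).toReal
  have hL : (√(2 * N * D)) ^ 2 ≤ 2 * N * D := (Real.sq_sqrt (by positivity)).le
  have hsup : ∀ x, |u x| ≤ √(2 * N * D) := fun x =>
    Real.abs_le_sqrt (sq_le_two_mul_toReal_eLpNorm_mul_toReal_eLpNorm_deriv hu hu₂ hu'₂ x)
  have hdist : (eLpNorm (fun x => ρ x - ρt) 2 volume).toReal ≤ M :=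
    ENNReal.toReal_le_of_le_ofReal hM hρM
  refine sq_le_of_mul_sq_le_sq_add_mul_mul hρt hL <|
    (mul_sq_toReal_eLpNorm_le hρ hρ₂ hu₂ (Real.sqrt_nonneg _) hsup).trans ?_
  gcongr
end
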